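/- Let $\mu$ be a Borel probability measure on $[0,R]$ with $R\in\operatorname{supp}\mu$. A subnormal weighted shift with Berger measure $\mu$ admits an $n$-step subnormal extension if and only if $1/t^n \in L^1(\mu)$. -/

import Mathlib

open MeasureTheory

/-- The moments `γ n = α₀² ⋯ α_{n-1}²` of a weighted shift. -/
noncomputable def gam (α : ℕ → ℝ) (n : ℕ) : ℝ := ∏ k ∈ Finset.range n, α k ^ 2

/-- `μ` is the Berger measure of the weighted shift `W_α`. -/
def IsBergerMeasure (α : ℕ → ℝ) (μ : Measure ℝ) : Prop :=
  IsProbabilityMeasure μ ∧ μ (Set.Icc 0 (⨆ n, α n ^ 2))ᶜ = 0 ∧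
    ∀ n : ℕ, gam α n = ∫ t, t ^ n ∂μ

/-- Berger's characterization of subnormality of the weighted shift. -/
def BergerSubnormal (α : ℕ → ℝ) : Prop := ∃ μ : Measure ℝ, IsBergerMeasure α μ

/-- The `n`-step extension `W_{(x_n,…,x_1)α}`: prepend the weights `x_n, …, x_1`. -/
noncomputable def extSeq (n : ℕ) (x : ℕ → ℝ) (α : ℕ → ℝ) : ℕ → ℝ :=
  fun k => if k < n then x (n - k) else α (k - n)

/-! If the extension has Berger measure `ν`, comparing moments gives `t ^ n dν = γ dμ`, where `γ > 0`
is the product of the new squared weights; since a finite measure on a compact interval is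
determined by its moments, `μ = (t ^ n / γ) ν`, which has no atom at `0` and integrates `1 / t ^ n`.
Conversely, `ν = t⁻ⁿ dμ / ∫ t⁻ⁿ dμ` is a probability measure whose moments are
`J m / J 0` with `J k = ∫ t ^ (k - n) dμ`; these telescope, so `ν` is the Berger measure of the
extension whose new weights are the square roots of the ratios of consecutive `J k`. -/

open Set Polynomial

section MomentDeterminacy

variable {μ ν : Measure ℝ} {a b : ℝ}

lemma integrable_of_ae_mem_Icc [IsFiniteMeasure μ] (hμ : ∀ᵐ t ∂μ, t ∈ Icc a b) {f : ℝ → ℝ}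
    (hf : Continuous f) : Integrable f μ := by
  rw [← Measure.restrict_eq_self_of_ae_mem hμ]
  exact hf.continuousOn.integrableOn_compact isCompact_Icc

variable [IsFiniteMeasure μ] [IsFiniteMeasure ν]
  (hμ : ∀ᵐ t ∂μ, t ∈ Icc a b) (hν : ∀ᵐ t ∂ν, t ∈ Icc a b)
  (h : ∀ m : ℕ, ∫ t, t ^ m ∂μ = ∫ t, t ^ m ∂ν)
include hμ hν h

lemma integral_eval_eq_of_moments_eq (p : ℝ[X]) : ∫ t, p.eval t ∂μ = ∫ t, p.eval t ∂ν := by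
  induction p using Polynomial.induction_on' with
  | add p q hp hq =>
    simp only [eval_add]
    rw [integral_add (integrable_of_ae_mem_Icc hμ p.continuous)
        (integrable_of_ae_mem_Icc hμ q.continuous),
      integral_add (integrable_of_ae_mem_Icc hν p.continuous)
        (integrable_of_ae_mem_Icc hν q.continuous), hp, hq]
  | monomial m c => simp only [eval_monomial, integral_const_mul, h m]

lemma integral_eq_of_moments_eq {g : ℝ → ℝ} (hg : Continuous g) :
    ∫ t, g t ∂μ = ∫ t, g t ∂ν := by
  refine eq_of_forall_dist_le fun δ hδ => ?_
  set M := μ.real univ + ν.real univ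
  obtain ⟨p, hp⟩ := exists_polynomial_near_of_continuousOn a b g hg.continuousOn (δ / (M + 1))
    (by positivity)
  have approx : ∀ (ρ : Measure ℝ) [IsFiniteMeasure ρ], (∀ᵐ t ∂ρ, t ∈ Icc a b) →
      dist (∫ t, g t ∂ρ) (∫ t, p.eval t ∂ρ) ≤ δ / (M + 1) * ρ.real univ := by
    intro ρ _ hρ
    rw [dist_eq_norm, ← integral_sub (integrable_of_ae_mem_Icc hρ hg)
      (integrable_of_ae_mem_Icc hρ p.continuous)]
    refine norm_integral_le_of_norm_le_const ?_
    filter_upwards [hρ] with t ht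
    rw [Real.norm_eq_abs, abs_sub_comm]
    exact (hp t ht).le
  calc dist (∫ t, g t ∂μ) (∫ t, g t ∂ν)
      ≤ dist (∫ t, g t ∂μ) (∫ t, p.eval t ∂μ) + dist (∫ t, g t ∂ν) (∫ t, p.eval t ∂ν) := by
        rw [dist_comm (∫ t, g t ∂ν), integral_eval_eq_of_moments_eq hμ hν h p]
        exact dist_triangle _ _ _
    _ ≤ δ / (M + 1) * M := by rw [mul_add]; exact add_le_add (approx μ hμ) (approx ν hν)
    _ ≤ δ := by
        rw [div_mul_eq_mul_div, div_le_iff₀ (by positivity)]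
        nlinarith

theorem Measure.eq_of_moments_eq : μ = ν :=
  ext_of_forall_integral_eq_of_IsFiniteMeasure fun f =>
    integral_eq_of_moments_eq hμ hν h f.continuous

end MomentDeterminacy

lemma integral_withDensity_ofReal {α : Type*} [MeasurableSpace α] {μ : Measure α} {f : α → ℝ}
    (hf : Measurable f) (hf₀ : 0 ≤ᵐ[μ] f) (g : α → ℝ) :
    ∫ x, g x ∂μ.withDensity (fun x => ENNReal.ofReal (f x)) = ∫ x, f x * g x ∂μ := by
  rw [integral_withDensity_eq_integral_toReal_smul hf.ennreal_ofReal
    (ae_of_all _ fun _ => ENNReal.ofReal_lt_top)]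
  refine integral_congr_ae ?_
  filter_upwards [hf₀] with x hx
  rw [ENNReal.toReal_ofReal hx, smul_eq_mul]

lemma integral_pos_of_ae_pos {α : Type*} [MeasurableSpace α] {μ : Measure α} [NeZero μ]
    {f : α → ℝ} (hf : Integrable f μ) (hpos : ∀ᵐ x ∂μ, 0 < f x) : 0 < ∫ x, f x ∂μ := by
  rw [integral_pos_iff_support_of_nonneg_ae (hpos.mono fun _ hx => hx.le) hf, pos_iff_ne_zero]
  intro hzero
  obtain ⟨x, hx, hx0⟩ := (hpos.and (measure_eq_zero_iff_ae_notMem.1 hzero)).exists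
  exact hx0 hx.ne'

section ExtSeq

variable {n : ℕ} {x α : ℕ → ℝ}

lemma gam_nonneg (β : ℕ → ℝ) (m : ℕ) : 0 ≤ gam β m :=
  Finset.prod_nonneg fun _ _ => sq_nonneg _

lemma gam_succ (β : ℕ → ℝ) (m : ℕ) : gam β (m + 1) = gam β m * β m ^ 2 :=
  Finset.prod_range_succ _ _

lemma extSeq_of_lt {k : ℕ} (hk : k < n) : extSeq n x α k = x (n - k) := if_pos hk

@[simp]
lemma extSeq_add (k : ℕ) : extSeq n x α (n + k) = α k := by
  simp [extSeq]

lemma gam_extSeq_add (m : ℕ) : gam (extSeq n x α) (n + m) = gam (extSeq n x α) n * gam α m := by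
  simp only [gam, Finset.prod_range_add, extSeq_add]

lemma gam_extSeq_pos (hx : ∀ j, 1 ≤ j → j ≤ n → 0 < x j) : 0 < gam (extSeq n x α) n :=
  Finset.prod_pos fun k hk => by
    rw [Finset.mem_range] at hk
    rw [extSeq_of_lt hk]
    exact pow_pos (hx _ (by omega) (by omega)) 2

lemma iSup_sq_le_iSup_sq_extSeq : ⨆ k, α k ^ 2 ≤ ⨆ k, extSeq n x α k ^ 2 := by
  by_cases hα : BddAbove (range fun k => α k ^ 2)
  · have hβ : BddAbove (range fun k => extSeq n x α k ^ 2) := by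
      refine (hα.union (finite_range fun j : Fin (n + 1) => x j ^ 2).bddAbove).mono ?_
      rintro - ⟨k, rfl⟩
      by_cases hk : k < n
      · exact Or.inr ⟨⟨n - k, by omega⟩, by simp [extSeq_of_lt hk]⟩
      · exact Or.inl ⟨k - n, by simp [extSeq, hk]⟩
    refine ciSup_le fun k => ?_
    simpa using le_ciSup hβ (n + k)
  · rw [Real.iSup_of_not_bddAbove hα]
    exact Real.iSup_nonneg fun k => sq_nonneg _

lemma gam_eq_div_of_sq_eq_div {β J : ℕ → ℝ} (hJ : ∀ k, J k ≠ 0)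
    (hβ : ∀ k, β k ^ 2 = J (k + 1) / J k) (m : ℕ) : gam β m = J m / J 0 := by
  induction m with
  | zero => simp [gam, hJ 0]
  | succ m ih => rw [gam_succ, ih, hβ]; field_simp [hJ m]

lemma gam_extSeq_sqrt_eq_div {J : ℕ → ℝ} (hJ : ∀ k, 0 < J k) (hα : ∀ m, gam α m = J (n + m))
    (m : ℕ) : gam (extSeq n (fun j => √(J (n - j + 1) / J (n - j))) α) m = J m / J 0 := by
  refine gam_eq_div_of_sq_eq_div (fun k => (hJ k).ne') (fun k => ?_) m
  by_cases hk : k < n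
  · rw [extSeq_of_lt hk, Real.sq_sqrt (div_pos (hJ _) (hJ _)).le, Nat.sub_sub_self hk.le]
  · obtain ⟨i, rfl⟩ := Nat.exists_eq_add_of_le (not_lt.1 hk)
    rw [extSeq_add, eq_div_iff (hJ _).ne', ← hα, mul_comm, ← gam_succ, hα, add_assoc]

end ExtSeq

lemma IsBergerMeasure.ae_mem_Icc {α : ℕ → ℝ} {μ : Measure ℝ} (h : IsBergerMeasure α μ) :
    ∀ᵐ t ∂μ, t ∈ Icc 0 (⨆ k, α k ^ 2) :=
  mem_ae_iff.2 h.2.1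

section Extension

variable {α x : ℕ → ℝ} {μ ν : Measure ℝ} {n : ℕ}

theorem IsBergerMeasure.eq_withDensity_of_extSeq (hμ : IsBergerMeasure α μ)
    (hν : IsBergerMeasure (extSeq n x α) ν) (hc : gam (extSeq n x α) n ≠ 0) :
    μ = ν.withDensity fun t => ENNReal.ofReal (t ^ n / gam (extSeq n x α) n) := by
  have := hμ.1
  have := hν.1
  have hνS := hν.ae_mem_Icc
  have hμS : ∀ᵐ t ∂μ, t ∈ Icc 0 (⨆ k, extSeq n x α k ^ 2) :=
    hμ.ae_mem_Icc.mono fun t ht => ⟨ht.1, ht.2.trans iSup_sq_le_iSup_sq_extSeq⟩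
  have hd : Measurable fun t : ℝ => t ^ n / gam (extSeq n x α) n := by fun_prop
  have hd₀ : 0 ≤ᵐ[ν] fun t => t ^ n / gam (extSeq n x α) n :=
    hνS.mono fun t ht => div_nonneg (pow_nonneg ht.1 n) (gam_nonneg _ _)
  have := isFiniteMeasure_withDensity_ofReal
    (integrable_of_ae_mem_Icc hνS (by fun_prop : Continuous fun t : ℝ =>
      t ^ n / gam (extSeq n x α) n)).hasFiniteIntegral
  refine Measure.eq_of_moments_eq hμS ((withDensity_absolutelyContinuous _ _).ae_le hνS)
    fun m => ?_
  simp_rw [integral_withDensity_ofReal hd hd₀, div_mul_eq_mul_div, ← pow_add]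
  rw [integral_div, ← hμ.2.2, ← hν.2.2, gam_extSeq_add, mul_div_cancel_left₀ _ hc]

lemma withDensity_pow_div_singleton_zero (hn : n ≠ 0) (c : ℝ) :
    ν.withDensity (fun t => ENNReal.ofReal (t ^ n / c)) {0} = 0 := by
  rw [withDensity_apply _ (measurableSet_singleton 0), lintegral_singleton]
  simp [hn]

lemma integrable_one_div_pow_withDensity [IsFiniteMeasure ν] (n : ℕ) (c : ℝ) :
    Integrable (fun t => 1 / t ^ n) (ν.withDensity fun t => ENNReal.ofReal (t ^ n / c)) := by
  have hd : Measurable fun t : ℝ => ENNReal.ofReal (t ^ n / c) := by fun_prop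
  rw [integrable_withDensity_iff hd (ae_of_all _ fun _ => ENNReal.ofReal_lt_top)]
  refine (integrable_const |c⁻¹|).mono' (by fun_prop) (ae_of_all _ fun t => ?_)
  rw [ENNReal.toReal_ofReal', norm_mul, Real.norm_eq_abs, Real.norm_eq_abs]
  calc |1 / t ^ n| * |max (t ^ n / c) 0| ≤ |1 / t ^ n| * |t ^ n / c| := by
        rw [abs_of_nonneg (le_max_right (t ^ n / c) 0)]
        gcongr
        exact max_le (le_abs_self _) (abs_nonneg _)
    _ ≤ |c⁻¹| := by
        rw [← abs_mul]
        rcases eq_or_ne (t ^ n) 0 with h | h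
        · simp [h]
        · exact le_of_eq (congrArg _ (by field_simp))

lemma integrable_zpow_sub_of_integrable {R : ℝ} (hμ : ∀ᵐ t ∂μ, t ∈ Ioc 0 R)
    (hint : Integrable (fun t => 1 / t ^ n) μ) (k : ℕ) :
    Integrable (fun t => t ^ ((k : ℤ) - n)) μ := by
  refine (hint.bdd_mul (c := R ^ k) (continuous_pow k).aestronglyMeasurable ?_).congr ?_
  · filter_upwards [hμ] with t ht
    rw [norm_pow, Real.norm_of_nonneg ht.1.le]
    exact pow_le_pow_left₀ ht.1.le ht.2 k
  · filter_upwards [hμ] with t ht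
    rw [zpow_sub₀ ht.1.ne', zpow_natCast, zpow_natCast, mul_one_div]

theorem IsBergerMeasure.exists_subnormal_extSeq (hμ : IsBergerMeasure α μ) (h0 : μ {0} = 0)
    (hint : Integrable (fun t => 1 / t ^ n) μ) :
    ∃ x : ℕ → ℝ, (∀ j, 1 ≤ j → j ≤ n → 0 < x j) ∧ BergerSubnormal (extSeq n x α) := by
  have := hμ.1
  have hpos : ∀ᵐ t ∂μ, t ∈ Ioc 0 (⨆ k, α k ^ 2) := by
    filter_upwards [hμ.ae_mem_Icc, measure_eq_zero_iff_ae_notMem.1 h0] with t ht ht0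
    exact ⟨ht.1.lt_of_ne (Ne.symm ht0), ht.2⟩
  set J : ℕ → ℝ := fun k => ∫ t, t ^ ((k : ℤ) - n) ∂μ
  have hJ : ∀ k, 0 < J k := fun k => integral_pos_of_ae_pos
    (integrable_zpow_sub_of_integrable hpos hint k) (hpos.mono fun t ht => zpow_pos ht.1 _)
  have hα : ∀ m, gam α m = J (n + m) := fun m => by simp [J, hμ.2.2]
  have hd : Measurable fun t : ℝ => t ^ (-(n : ℤ)) / J 0 := by fun_prop
  have hd₀ : 0 ≤ᵐ[μ] fun t => t ^ (-(n : ℤ)) / J 0 :=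
    hpos.mono fun t ht => div_nonneg (zpow_pos ht.1 _).le (hJ 0).le
  set ν := μ.withDensity fun t => ENNReal.ofReal (t ^ (-(n : ℤ)) / J 0)
  have hνm : ∀ m : ℕ, ∫ t, t ^ m ∂ν = J m / J 0 := fun m => by
    rw [integral_withDensity_ofReal hd hd₀, ← integral_div]
    refine integral_congr_ae (hpos.mono fun t ht => ?_)
    dsimp only
    rw [div_mul_eq_mul_div, ← zpow_natCast, ← zpow_add₀ ht.1.ne', neg_add_eq_sub]
  have hν : IsProbabilityMeasure ν :=
    ⟨by simpa [div_self (hJ 0).ne', measureReal_def, ENNReal.toReal_eq_one_iff] using hνm 0⟩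
  refine ⟨_, fun j _ _ => Real.sqrt_pos.2 (div_pos (hJ _) (hJ _)), ν, hν, ?_,
    fun m => by rw [gam_extSeq_sqrt_eq_div hJ hα, hνm]⟩
  exact withDensity_absolutelyContinuous _ _ <| measure_mono_null
    (compl_subset_compl.2 (Icc_subset_Icc_right iSup_sq_le_iSup_sq_extSeq)) hμ.2.1

end Extension

theorem stmt_12_general (α : ℕ → ℝ)
    (μ : Measure ℝ) (hμ : IsBergerMeasure α μ)
    (n : ℕ) (hn : 1 ≤ n) :
    (∃ x : ℕ → ℝ, (∀ j, 1 ≤ j → j ≤ n → 0 < x j) ∧ BergerSubnormal (extSeq n x α)) ↔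
      (μ {0} = 0 ∧ Integrable (fun t => 1 / t ^ n) μ) := by
  refine ⟨fun ⟨x, hx, ν, hν⟩ => ?_, fun ⟨h0, hint⟩ => hμ.exists_subnormal_extSeq h0 hint⟩
  have := hν.1
  rw [hμ.eq_withDensity_of_extSeq hν (gam_extSeq_pos hx).ne']
  exact ⟨withDensity_pow_div_singleton_zero (by omega) _, integrable_one_div_pow_withDensity _ _⟩

theorem stmt_12 (α : ℕ → ℝ) (hpos : ∀ k, 0 < α k) (hbdd : BddAbove (Set.range α))
    (μ : Measure ℝ) (hμ : IsBergerMeasure α μ)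
    (hsupp : ∀ U ∈ nhds (⨆ k, α k ^ 2), μ U ≠ 0)
    (n : ℕ) (hn : 1 ≤ n) :
    (∃ x : ℕ → ℝ, (∀ j, 1 ≤ j → j ≤ n → 0 < x j) ∧ BergerSubnormal (extSeq n x α)) ↔
      (μ {0} = 0 ∧ Integrable (fun t => 1 / t ^ n) μ) :=
  stmt_12_general α μ hμ n hn
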